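/- Let a and b be integers greater than 1 such that a^m ≠ b^n for all positive integers m and n. Then for every positive integer ℓ there exist infinitely many positive integers n such that M_A(b^n) ≥ ℓ. -/

import Mathlib

/-!
Write `θ = log_a b`. The hypothesis makes `θ` irrational, so the fractional parts of `n θ`
are dense, even along positive `n`. Hence for every `m > 0` there are infinitely many `n` and
`s` with `log_a m < n θ - s < log_a (m + 1)`, that is `a ^ s * m ≤ b ^ n < a ^ s * (m + 1)`:
the leading base-`a` digits of `b ^ n` are those of `m`. Taking for `m` the number with base-`a`
digits `1 0 1 0 … 0 1` forces `b ^ n` to have many maximal blocks.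
-/

/-- The `i`-th digit of `n` in base `a`. -/
def digit (a n i : ℕ) : ℕ := n / a ^ i % a

/-- `blockCount a n` is the number of maximal `a`-adic blocks of nonzero digits in the
base-`a` representation of `n`, counted via the top ends of the blocks. -/
noncomputable def blockCount (a n : ℕ) : ℕ :=
  {i : ℕ | digit a n i ≠ 0 ∧ digit a n (i + 1) = 0}.ncard

open Filter Set Topology

section Digits

variable {a : ℕ}

theorem digit_add (n s i : ℕ) : digit a n (s + i) = digit a (n / a ^ s) i := by
  rw [digit, digit, Nat.div_div_eq_div_mul, ← pow_add]

theorem finite_setOf_digit_ne_zero (ha : 1 < a) (n : ℕ) : {i | digit a n i ≠ 0}.Finite := by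
  refine (Set.finite_Iio n).subset fun i hi => ?_
  rw [Set.mem_Iio]
  by_contra! hni
  have hlt : n < a ^ i := hni.trans_lt (Nat.lt_pow_self ha)
  exact hi (by rw [digit, Nat.div_eq_of_lt hlt, Nat.zero_mod])

theorem blockCount_div_pow_le (ha : 1 < a) (n s : ℕ) :
    blockCount a (n / a ^ s) ≤ blockCount a n := by
  refine Set.ncard_le_ncard_of_injOn (s + ·) (fun i hi => ?_) (add_right_injective s).injOn
    ((finite_setOf_digit_ne_zero ha n).subset fun i hi => hi.1)
  show digit a n (s + i) ≠ 0 ∧ digit a n (s + i + 1) = 0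
  rwa [add_assoc, digit_add, digit_add]

end Digits

/-- `gappedRepunit a k` has base-`a` digits `1 0 1 0 … 0 1`, with `k` ones. -/
def gappedRepunit (a : ℕ) : ℕ → ℕ
  | 0 => 0
  | k + 1 => a ^ 2 * gappedRepunit a k + 1

section GappedRepunit

variable {a : ℕ}

theorem gappedRepunit_succ_div (ha : 1 < a) (k : ℕ) :
    gappedRepunit a (k + 1) / a ^ 2 = gappedRepunit a k := by
  rw [gappedRepunit, Nat.mul_add_div (by positivity),
    Nat.div_eq_of_lt (Nat.one_lt_pow two_ne_zero ha), add_zero]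

theorem digit_gappedRepunit_succ_zero (ha : 1 < a) (k : ℕ) :
    digit a (gappedRepunit a (k + 1)) 0 = 1 := by
  rw [digit, pow_zero, Nat.div_one, gappedRepunit, pow_two, mul_assoc, Nat.mul_add_mod,
    Nat.mod_eq_of_lt ha]

theorem digit_gappedRepunit_succ_one (ha : 1 < a) (k : ℕ) :
    digit a (gappedRepunit a (k + 1)) 1 = 0 := by
  rw [digit, pow_one, gappedRepunit, pow_two, mul_assoc, Nat.mul_add_div (by omega),
    Nat.div_eq_of_lt ha, add_zero, Nat.mul_mod_right]

theorem digit_gappedRepunit (ha : 1 < a) :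
    ∀ {k j : ℕ}, j < k →
      digit a (gappedRepunit a k) (2 * j) ≠ 0 ∧ digit a (gappedRepunit a k) (2 * j + 1) = 0
  | k + 1, 0, _ => by
    simp [digit_gappedRepunit_succ_zero ha, digit_gappedRepunit_succ_one ha]
  | k + 1, j + 1, hj => by
    rw [show 2 * (j + 1) = 2 + 2 * j by ring, show 2 + 2 * j + 1 = 2 + (2 * j + 1) by ring,
      digit_add, digit_add, gappedRepunit_succ_div ha]
    exact digit_gappedRepunit ha (by omega)

theorem le_blockCount_gappedRepunit (ha : 1 < a) (k : ℕ) :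
    k ≤ blockCount a (gappedRepunit a k) := by
  calc k = (Set.Iio k).ncard := by simp
    _ ≤ blockCount a (gappedRepunit a k) :=
      Set.ncard_le_ncard_of_injOn (2 * ·) (fun j hj => digit_gappedRepunit ha hj)
        (fun i _ j _ hij => by simpa using hij)
        ((finite_setOf_digit_ne_zero ha _).subset fun i hi => hi.1)

end GappedRepunit

theorem irrational_logb_of_pow_ne_pow {a b : ℕ} (ha : 1 < a) (hb : 1 < b)
    (h : ∀ m n : ℕ, 0 < m → 0 < n → a ^ m ≠ b ^ n) : Irrational (Real.logb a b) := by
  rintro ⟨q, hq⟩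
  have haR : (1 : ℝ) < a := by exact_mod_cast ha
  have hq_pos : 0 < q := by
    exact_mod_cast hq ▸ Real.logb_pos haR (by exact_mod_cast hb)
  apply h q.num.natAbs q.den (by simpa using hq_pos.ne') q.den_pos
  have hnum : ((q.num.natAbs : ℕ) : ℝ) = Real.logb a b * q.den := by
    rw [← hq, Nat.cast_natAbs, abs_of_pos (Rat.num_pos.2 hq_pos)]
    exact_mod_cast (Rat.mul_den_eq_num q).symm
  have : (a : ℝ) ^ q.num.natAbs = (b : ℝ) ^ q.den := by
    rw [← Real.rpow_natCast, hnum, Real.rpow_mul (by positivity), Real.rpow_natCast,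
      Real.rpow_logb (by positivity) haR.ne' (by positivity)]
  exact_mod_cast this

theorem Irrational.frequently_exists_sub_intCast_mem_Ioo {θ : ℝ} (hθ : Irrational θ)
    {c d : ℝ} (hcd : c < d) :
    ∃ᶠ n : ℕ in atTop, ∃ k : ℤ, n * θ - k ∈ Ioo c d := by
  have hdense : DenseRange (· • (θ : AddCircle (1 : ℝ)) : ℤ → AddCircle (1 : ℝ)) :=
    AddCircle.denseRange_zsmul_coe_iff.2 (by rwa [div_one])
  -- In a compact group the closures of the `ℕ`- and `ℤ`-orbits coincide.
  have hcluster : MapClusterPt (((c + d) / 2 : ℝ) : AddCircle (1 : ℝ)) atTop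
      (· • (θ : AddCircle (1 : ℝ)) : ℕ → AddCircle (1 : ℝ)) :=
    ((mapClusterPt_atTop_nsmul_tfae _ _).out 0 3).2 (hdense _)
  have hnhds : ((↑) '' Ioo c d : Set (AddCircle (1 : ℝ))) ∈
      𝓝 (((c + d) / 2 : ℝ) : AddCircle (1 : ℝ)) :=
    QuotientAddGroup.isOpenMap_coe.image_mem_nhds
      (isOpen_Ioo.mem_nhds ⟨by linarith, by linarith⟩)
  refine (hcluster.frequently hnhds).mono ?_
  rintro n ⟨x, hx, hxn⟩
  rw [← AddCircle.coe_nsmul, QuotientAddGroup.eq, AddSubgroup.mem_zmultiples_iff] at hxn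
  obtain ⟨k, hk⟩ := hxn
  rw [zsmul_eq_mul, mul_one, nsmul_eq_mul] at hk
  exact ⟨k, by rwa [hk, sub_add_eq_sub_sub, sub_neg_eq_add, add_sub_cancel_left]⟩

theorem frequently_exists_pow_div_pow_eq {a b : ℕ} (ha : 1 < a) (hb : 1 < b)
    (h : ∀ m n : ℕ, 0 < m → 0 < n → a ^ m ≠ b ^ n) {m : ℕ} (hm : 0 < m) :
    ∃ᶠ n : ℕ in atTop, ∃ s : ℕ, b ^ n / a ^ s = m := by
  have haR : (1 : ℝ) < a := by exact_mod_cast ha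
  have hmR : (0 : ℝ) < m := by exact_mod_cast hm
  set θ := Real.logb a b
  set c := Real.logb a m
  set d := Real.logb a (m + 1)
  have hθ : 0 < θ := Real.logb_pos haR (by exact_mod_cast hb)
  have hcd : c < d := Real.logb_lt_logb haR hmR (by linarith)
  have hlarge : ∀ᶠ n : ℕ in atTop, d ≤ n * θ :=
    (tendsto_natCast_atTop_atTop.atTop_mul_const hθ).eventually_ge_atTop d
  refine ((irrational_logb_of_pow_ne_pow ha hb h).frequently_exists_sub_intCast_mem_Ioo hcd
    |>.and_eventually hlarge).mono ?_
  rintro n ⟨⟨k, hck, hkd⟩, hdn⟩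
  have hk : (0 : ℝ) ≤ k := by linarith
  lift k to ℕ using (by exact_mod_cast hk)
  have ha0 : (0 : ℝ) < a := by linarith
  have hrpow (x : ℝ) (hx : 0 < x) (j : ℕ) :
      x * (a : ℝ) ^ j = (a : ℝ) ^ (Real.logb a x + j) := by
    rw [Real.rpow_add ha0, Real.rpow_logb ha0 haR.ne' hx, Real.rpow_natCast]
  have hbn : (b : ℝ) ^ n = (a : ℝ) ^ ((n : ℝ) * θ) := by
    rw [mul_comm, Real.rpow_mul ha0.le, Real.rpow_logb ha0 haR.ne' (by positivity),
      Real.rpow_natCast]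
  have hlow : (m : ℝ) * (a : ℝ) ^ k < (b : ℝ) ^ n := by
    rw [hrpow _ hmR, hbn, Real.rpow_lt_rpow_left_iff haR]
    push_cast at hck
    linarith
  have hupp : (b : ℝ) ^ n < ((m : ℝ) + 1) * (a : ℝ) ^ k := by
    rw [hrpow _ (by positivity), hbn, Real.rpow_lt_rpow_left_iff haR]
    push_cast at hkd
    linarith
  exact ⟨k, Nat.div_eq_of_lt_le (by exact_mod_cast hlow.le) (by exact_mod_cast hupp)⟩

theorem stmt_11_general (a b : ℕ) (ha : 1 < a) (hb : 1 < b)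
    (h : ∀ m n : ℕ, 0 < m → 0 < n → a ^ m ≠ b ^ n) (ℓ : ℕ) :
    {n : ℕ | 0 < n ∧ ℓ ≤ blockCount a (b ^ n)}.Infinite := by
  have hleading := frequently_exists_pow_div_pow_eq ha hb h
    (m := gappedRepunit a (ℓ + 1)) (Nat.succ_pos _)
  refine Nat.frequently_atTop_iff_infinite.1
    ((hleading.and_eventually (eventually_gt_atTop 0)).mono ?_)
  rintro n ⟨⟨s, hs⟩, hn⟩
  refine ⟨hn, ?_⟩
  calc ℓ ≤ blockCount a (gappedRepunit a (ℓ + 1)) :=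
        (Nat.le_succ ℓ).trans (le_blockCount_gappedRepunit ha _)
    _ = blockCount a (b ^ n / a ^ s) := by rw [hs]
    _ ≤ blockCount a (b ^ n) := blockCount_div_pow_le ha _ _

theorem stmt_11 (a b : ℕ) (ha : 1 < a) (hb : 1 < b)
    (h : ∀ m n : ℕ, 0 < m → 0 < n → a ^ m ≠ b ^ n) (ℓ : ℕ) (hℓ : 0 < ℓ) :
    {n : ℕ | 0 < n ∧ ℓ ≤ blockCount a (b ^ n)}.Infinite :=
  stmt_11_general a b ha hb h ℓ
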